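/- Let H : ℝ → ℝ be the Heaviside function with H(y) = 1 for y > 0 and H(y) = 0 for y ≤ 0, let x₁(τ) = ((1/2)cos τ + (−π/4 + τ/2)·sin τ)·H(τ − π/2) + (−(1/2)cos τ + (3π/4 − τ/2)·sin τ)·H(τ − 3π/2) − (τ/4)·sin τ, and define x₂ : [0, 2π] → ℝ by x₂(τ) = ((−π²/32 + πτ/16 − 1/8)·cos τ + (π/16 − τ/8)·sin τ)·H(τ − π/2) + ((−3π²/32 + πτ/16 + 1/8)·cos τ + (−3π/16 + τ/8)·sin τ)·H(τ − 3π/2) − (τ²/32)·cos τ + (τ/16)·sin τ. Then x₂(0) = 0, x₂'(0) = 0, x₂ is continuously differentiable on [0, 2π], and for every τ ∈ (0, 2π) with τ ∉ {π/2, 3π/2}, x₂''(τ) + x₂(τ) = −x₁(τ)·(1 − H(τ − π/2) + H(τ − 3π/2)) + (1/16)·cos τ − (1/4)·cos τ − (1/2)·x₁''(τ). -/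

import Mathlib

open Real

/-- Heaviside function: `H y = 1` for `y > 0`, `H y = 0` for `y ≤ 0`. -/
noncomputable def H (y : ℝ) : ℝ := if 0 < y then 1 else 0

/-- First-order Lindstedt–Poincaré correction for `ẍ + (1 + εH(x))x = 0`. -/
noncomputable def x₁ (τ : ℝ) : ℝ :=
  ((1 / 2) * Real.cos τ + (-(π / 4) + τ / 2) * Real.sin τ) * H (τ - π / 2)
    + (-(1 / 2) * Real.cos τ + (3 * π / 4 - τ / 2) * Real.sin τ) * H (τ - 3 * π / 2)
    - (τ / 4) * Real.sin τ

/-- Second-order Lindstedt–Poincaré correction for `ẍ + (1 + εH(x))x = 0`. -/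
noncomputable def x₂ (τ : ℝ) : ℝ :=
  ((-(π ^ 2 / 32) + π * τ / 16 - 1 / 8) * Real.cos τ
      + (π / 16 - τ / 8) * Real.sin τ) * H (τ - π / 2)
    + ((-(3 * π ^ 2 / 32) + π * τ / 16 + 1 / 8) * Real.cos τ
        + (-(3 * π / 16) + τ / 8) * Real.sin τ) * H (τ - 3 * π / 2)
    - (τ ^ 2 / 32) * Real.cos τ + (τ / 16) * Real.sin τ

lemma H_pos' {y : ℝ} (h : 0 < y) : H y = 1 := if_pos h
lemma H_nonpos' {y : ℝ} (h : y ≤ 0) : H y = 0 := if_neg (not_lt.mpr h)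
lemma abs_H_le_one' (y : ℝ) : |H y| ≤ 1 := by unfold H; split <;> norm_num

lemma key_hasDerivAt (g g' : ℝ → ℝ) (a : ℝ) (hg : ∀ t, HasDerivAt g (g' t) t)
    (h0 : g a = 0) (h1 : g' a = 0) (τ : ℝ) :
    HasDerivAt (fun t => g t * H (t - a)) (g' τ * H (τ - a)) τ := by
  rcases lt_trichotomy τ a with h | h | h
  · rw [H_nonpos' (by linarith)]
    have heq : (fun t => g t * H (t - a)) =ᶠ[nhds τ] fun _ => (0:ℝ) := by
      refine Filter.eventuallyEq_of_mem (Iio_mem_nhds h) fun t ht => ?_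
      simp [H_nonpos' (by simpa using le_of_lt ht : t - a ≤ 0)]
    simpa using (hasDerivAt_const τ (0:ℝ)).congr_of_eventuallyEq heq
  · subst h
    rw [H_nonpos' (by linarith)]
    rw [hasDerivAt_iff_tendsto_slope]
    simp only [mul_zero]
    have hgs : Filter.Tendsto (slope g τ) (nhdsWithin τ {τ}ᶜ) (nhds 0) := by
      have := (hasDerivAt_iff_tendsto_slope).mp (hg τ)
      rwa [h1] at this
    refine squeeze_zero_norm (fun x => ?_) (by simpa using hgs.norm)
    have hfa : g τ * H (τ - τ) = 0 := by simp [h0]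
    rw [slope_def_field, slope_def_field, hfa, h0, sub_zero, sub_zero]
    calc |g x * H (x - τ) / (x - τ)| = |g x / (x - τ)| * |H (x - τ)| := by
          rw [← abs_mul]; ring_nf
      _ ≤ |g x / (x - τ)| * 1 :=
          mul_le_mul_of_nonneg_left (abs_H_le_one' _) (abs_nonneg _)
      _ = |g x / (x - τ)| := mul_one _
  · have hH : H (τ - a) = 1 := H_pos' (by linarith)
    rw [hH]
    have heq : (fun t => g t * H (t - a)) =ᶠ[nhds τ] g := by
      refine Filter.eventuallyEq_of_mem (Ioi_mem_nhds h) fun t ht => ?_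
      simp [H_pos' (by simpa using ht : (0:ℝ) < t - a)]
    simpa using (hg τ).congr_of_eventuallyEq heq

lemma key_contDiff (g g' : ℝ → ℝ) (a : ℝ) (hg : ∀ t, HasDerivAt g (g' t) t)
    (hg' : Continuous g') (h0 : g a = 0) (h1 : g' a = 0) :
    ContDiff ℝ 1 (fun t => g t * H (t - a)) := by
  have hD : ∀ τ, HasDerivAt (fun t => g t * H (t - a)) (g' τ * H (τ - a)) τ :=
    key_hasDerivAt g g' a hg h0 h1
  rw [contDiff_one_iff_deriv]
  refine ⟨fun τ => (hD τ).differentiableAt, ?_⟩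
  have hder : deriv (fun t => g t * H (t - a)) = fun τ => g' τ * H (τ - a) :=
    funext fun τ => (hD τ).deriv
  rw [hder, continuous_iff_continuousAt]
  intro τ
  rcases lt_trichotomy τ a with h | h | h
  · have heq : (fun t => g' t * H (t - a)) =ᶠ[nhds τ] fun _ => (0:ℝ) := by
      refine Filter.eventuallyEq_of_mem (Iio_mem_nhds h) fun t ht => ?_
      simp [H_nonpos' (by simpa using le_of_lt ht : t - a ≤ 0)]
    exact ContinuousAt.congr_of_eventuallyEq continuousAt_const heq
  · subst h
    rw [ContinuousAt, show g' τ * H (τ - τ) = 0 from by simp [h1]]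
    have hgs : Filter.Tendsto g' (nhds τ) (nhds 0) := by
      have := hg'.continuousAt (x := τ); rwa [ContinuousAt, h1] at this
    refine squeeze_zero_norm (fun x => ?_) (by simpa using hgs.norm)
    rw [Real.norm_eq_abs, abs_mul]
    calc |g' x| * |H (x - τ)| ≤ |g' x| * 1 :=
          mul_le_mul_of_nonneg_left (abs_H_le_one' _) (abs_nonneg _)
      _ = |g' x| := mul_one _
  · have heq : (fun t => g' t * H (t - a)) =ᶠ[nhds τ] g' := by
      refine Filter.eventuallyEq_of_mem (Ioi_mem_nhds h) fun t ht => ?_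
      simp [H_pos' (by simpa using ht : (0:ℝ) < t - a)]
    exact ContinuousAt.congr_of_eventuallyEq (hg'.continuousAt) heq

noncomputable def phi (a b c d e f τ : ℝ) : ℝ :=
  (a + b*τ + c*τ^2) * Real.cos τ + (d + e*τ + f*τ^2) * Real.sin τ

lemma hasDerivAt_phi (a b c d e f τ : ℝ) :
    HasDerivAt (phi a b c d e f) (phi (b+d) (2*c+e) f (e-a) (2*f-b) (-c) τ) τ := by
  have hp : HasDerivAt (fun t : ℝ => a + b*t + c*t^2) (b + 2*c*τ) τ := by
    have := (((hasDerivAt_id τ).const_mul b).const_add a).add ((hasDerivAt_pow 2 τ).const_mul c)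
    simp only [id] at this
    refine this.congr_deriv ?_; push_cast; ring
  have hq : HasDerivAt (fun t : ℝ => d + e*t + f*t^2) (e + 2*f*τ) τ := by
    have := (((hasDerivAt_id τ).const_mul e).const_add d).add ((hasDerivAt_pow 2 τ).const_mul f)
    simp only [id] at this
    refine this.congr_deriv ?_; push_cast; ring
  have := (hp.mul (Real.hasDerivAt_cos τ)).add (hq.mul (Real.hasDerivAt_sin τ))
  refine this.congr_deriv ?_
  unfold phi; ring

lemma deriv_phi (a b c d e f : ℝ) :
    deriv (phi a b c d e f) = phi (b+d) (2*c+e) f (e-a) (2*f-b) (-c) :=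
  funext fun τ => (hasDerivAt_phi a b c d e f τ).deriv

lemma continuous_phi (a b c d e f : ℝ) : Continuous (phi a b c d e f) := by
  unfold phi; fun_prop

lemma contDiff_phi (a b c d e f : ℝ) : ContDiff ℝ 1 (phi a b c d e f) := by
  unfold phi
  have hpoly : ∀ u v w : ℝ, ContDiff ℝ 1 (fun t : ℝ => u + v*t + w*t^2) := fun u v w =>
    (contDiff_const.add (contDiff_const.mul contDiff_id)).add
      (contDiff_const.mul (contDiff_id.pow 2))
  exact ((hpoly a b c).mul Real.contDiff_cos).add ((hpoly d e f).mul Real.contDiff_sin)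

lemma deriv2_congr {f g : ℝ → ℝ} {s : Set ℝ} (hs : IsOpen s) {τ : ℝ} (hτ : τ ∈ s)
    (h : ∀ t ∈ s, f t = g t) : deriv (deriv f) τ = deriv (deriv g) τ :=
  (Filter.eventuallyEq_of_mem (hs.mem_nhds hτ) h).deriv.deriv_eq

lemma cos_3pi2 : Real.cos (3*π/2) = 0 := by
  rw [show (3*π/2:ℝ) = π + π/2 by ring, Real.cos_add]; simp

lemma sin_3pi2 : Real.sin (3*π/2) = -1 := by
  rw [show (3*π/2:ℝ) = π + π/2 by ring, Real.sin_add]; simp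

theorem stmt_6 :
    x₂ 0 = 0 ∧ deriv x₂ 0 = 0 ∧ ContDiffOn ℝ 1 x₂ (Set.Icc (0 : ℝ) (2 * π)) ∧
    ∀ τ ∈ Set.Ioo (0 : ℝ) (2 * π), τ ≠ π / 2 → τ ≠ 3 * π / 2 →
      deriv (deriv x₂) τ + x₂ τ
        = -x₁ τ * (1 - H (τ - π / 2) + H (τ - 3 * π / 2))
          + (1 / 16) * Real.cos τ - (1 / 4) * Real.cos τ
          - (1 / 2) * deriv (deriv x₁) τ := by
  have hπ := Real.pi_pos
  -- jump pieces of x₂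
  set G1 : ℝ → ℝ := phi (-(π^2/32) - 1/8) (π/16) 0 (π/16) (-(1/8)) 0 with hG1def
  set G1' : ℝ → ℝ := phi (π/16 + π/16) (2*0 + -(1/8)) 0 (-(1/8) - (-(π^2/32) - 1/8))
    (2*0 - π/16) (-0) with hG1'def
  set G2 : ℝ → ℝ := phi (-(3*π^2/32) + 1/8) (π/16) 0 (-(3*π/16)) (1/8) 0 with hG2def
  set G2' : ℝ → ℝ := phi (π/16 + -(3*π/16)) (2*0 + 1/8) 0 (1/8 - (-(3*π^2/32) + 1/8))
    (2*0 - π/16) (-0) with hG2'def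
  set B2 : ℝ → ℝ := phi 0 0 (-(1/32)) 0 (1/16) 0 with hB2def
  have hG1D : ∀ t, HasDerivAt G1 (G1' t) t := fun t => hasDerivAt_phi _ _ _ _ _ _ t
  have hG2D : ∀ t, HasDerivAt G2 (G2' t) t := fun t => hasDerivAt_phi _ _ _ _ _ _ t
  have hG1a : G1 (π/2) = 0 := by
    rw [hG1def]; unfold phi
    rw [Real.cos_pi_div_two, Real.sin_pi_div_two]; ring
  have hG1'a : G1' (π/2) = 0 := by
    rw [hG1'def]; unfold phi
    rw [Real.cos_pi_div_two, Real.sin_pi_div_two]; ring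
  have hG2a : G2 (3*π/2) = 0 := by
    rw [hG2def]; unfold phi
    rw [cos_3pi2, sin_3pi2]; ring
  have hG2'a : G2' (3*π/2) = 0 := by
    rw [hG2'def]; unfold phi
    rw [cos_3pi2, sin_3pi2]; ring
  -- splitting of x₂
  have hx2 : x₂ = fun t => (G1 t * H (t - π/2)) + ((G2 t * H (t - 3*π/2)) + B2 t) := by
    funext t
    rw [hG1def, hG2def, hB2def]
    unfold x₂ phi
    ring
  -- Part 1
  have part1 : x₂ 0 = 0 := by
    unfold x₂
    rw [H_nonpos' (by linarith), H_nonpos' (by linarith)]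
    simp
  -- Part 2
  have hloc1 : ∀ t ∈ Set.Iio (π/2), x₂ t = B2 t := by
    intro t ht
    simp only [Set.mem_Iio] at ht
    unfold x₂
    rw [H_nonpos' (by linarith), H_nonpos' (by linarith), hB2def]
    unfold phi; ring
  have part2 : deriv x₂ 0 = 0 := by
    have hev : x₂ =ᶠ[nhds 0] B2 :=
      Filter.eventuallyEq_of_mem (Iio_mem_nhds (by linarith : (0:ℝ) < π/2)) hloc1
    rw [hev.deriv_eq, hB2def, deriv_phi]
    unfold phi; simp
  -- Part 3
  have part3 : ContDiffOn ℝ 1 x₂ (Set.Icc (0 : ℝ) (2 * π)) := by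
    rw [hx2]
    exact (((key_contDiff G1 G1' (π/2) hG1D (by rw [hG1'def]; exact continuous_phi _ _ _ _ _ _)
        hG1a hG1'a).add
      ((key_contDiff G2 G2' (3*π/2) hG2D (by rw [hG2'def]; exact continuous_phi _ _ _ _ _ _)
        hG2a hG2'a).add
      (by rw [hB2def]; exact contDiff_phi _ _ _ _ _ _))).contDiffOn)
  refine ⟨part1, part2, part3, ?_⟩
  -- Part 4
  intro τ hτ hne1 hne2
  obtain ⟨hτ0, hτ2π⟩ := hτ
  rcases lt_trichotomy τ (π/2) with hr | hr | hr
  · -- region 1 : τ < π/2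
    have hH1 : H (τ - π/2) = 0 := H_nonpos' (by linarith)
    have hH2 : H (τ - 3*π/2) = 0 := H_nonpos' (by linarith)
    have hx2loc : ∀ t ∈ Set.Iio (π/2), x₂ t = phi 0 0 (-(1/32)) 0 (1/16) 0 t := by
      intro t ht; simp only [Set.mem_Iio] at ht
      unfold x₂
      rw [H_nonpos' (by linarith), H_nonpos' (by linarith)]
      unfold phi; ring
    have hx1loc : ∀ t ∈ Set.Iio (π/2), x₁ t = phi 0 0 0 0 (-(1/4)) 0 t := by
      intro t ht; simp only [Set.mem_Iio] at ht
      unfold x₁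
      rw [H_nonpos' (by linarith), H_nonpos' (by linarith)]
      unfold phi; ring
    rw [deriv2_congr isOpen_Iio hr hx2loc, deriv2_congr isOpen_Iio hr hx1loc]
    simp only [deriv_phi]
    unfold x₁ x₂
    rw [hH1, hH2]
    unfold phi; ring
  · exact absurd hr hne1
  rcases lt_trichotomy τ (3*π/2) with hr' | hr' | hr'
  · -- region 2 : π/2 < τ < 3π/2
    have hH1 : H (τ - π/2) = 1 := H_pos' (by linarith)
    have hH2 : H (τ - 3*π/2) = 0 := H_nonpos' (by linarith)
    have hmem : τ ∈ Set.Ioo (π/2) (3*π/2) := ⟨hr, hr'⟩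
    have hx2loc : ∀ t ∈ Set.Ioo (π/2) (3*π/2),
        x₂ t = phi (-(π^2/32) - 1/8) (π/16) (-(1/32)) (π/16) (-(1/8) + 1/16) 0 t := by
      intro t ht; obtain ⟨h1, h2⟩ := ht
      unfold x₂
      rw [H_pos' (by linarith), H_nonpos' (by linarith)]
      unfold phi; ring
    have hx1loc : ∀ t ∈ Set.Ioo (π/2) (3*π/2),
        x₁ t = phi (1/2) 0 0 (-(π/4)) (1/2 - 1/4) 0 t := by
      intro t ht; obtain ⟨h1, h2⟩ := ht
      unfold x₁
      rw [H_pos' (by linarith), H_nonpos' (by linarith)]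
      unfold phi; ring
    rw [deriv2_congr isOpen_Ioo hmem hx2loc, deriv2_congr isOpen_Ioo hmem hx1loc]
    simp only [deriv_phi]
    unfold x₁ x₂
    rw [hH1, hH2]
    unfold phi; ring
  · exact absurd hr' hne2
  · -- region 3 : 3π/2 < τ
    have hH1 : H (τ - π/2) = 1 := H_pos' (by linarith)
    have hH2 : H (τ - 3*π/2) = 1 := H_pos' (by linarith)
    have hx2loc : ∀ t ∈ Set.Ioi (3*π/2),
        x₂ t = phi (-(π^2/8)) (π/8) (-(1/32)) (-(π/8)) (1/16) 0 t := by
      intro t ht; simp only [Set.mem_Ioi] at ht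
      unfold x₂
      rw [H_pos' (by linarith), H_pos' (by linarith)]
      unfold phi; ring
    have hx1loc : ∀ t ∈ Set.Ioi (3*π/2),
        x₁ t = phi 0 0 0 (π/2) (-(1/4)) 0 t := by
      intro t ht; simp only [Set.mem_Ioi] at ht
      unfold x₁
      rw [H_pos' (by linarith), H_pos' (by linarith)]
      unfold phi; ring
    rw [deriv2_congr isOpen_Ioi hr' hx2loc, deriv2_congr isOpen_Ioi hr' hx1loc]
    simp only [deriv_phi]
    unfold x₁ x₂
    rw [hH1, hH2]
    unfold phi; ring
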